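/- (Lemma 7.) Let p, q, s be integers with 3 ≤ p < q, s ≥ 1, gcd(p,q) = gcd(s,pq) = 1, and set r = pq + s. Let m be an integer with m < pqr, and set I'₁ = (m−s−q−p, m−s−q] ∩ ℤ and I'₂ = (m−s−p, m−s] ∩ ℤ, and Σ₁ = σ_s(m) − σ_s(m−p) − σ_s(m−q) + σ_s(m−q−p). Then I'₁ ∪ I'₂ contains at most one multiple of r, and: if I'₁ ∪ I'₂ contains no multiple of r then a_m = Σ₁; if a multiple αr of r lies in I'₁ then a_m = Σ₁ − χ(αr); and if a multiple αr of r lies in I'₂ then a_m = Σ₁ + χ(αr); here a_m is the m-th coefficient of Q_{p,q,r} (interpreted as 0 for m < 0 or m > (p−1)(q−1)(r−1)) and χ = χ_{p,q,r}. -/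

import Mathlib

open Polynomial Classical

/-- Denominator `(X^{pq}-1)(X^{qr}-1)(X^{rp}-1)(X-1)` of the ternary
inclusion-exclusion polynomial. -/
noncomputable def incexcD (p q r : ℕ) : Polynomial ℤ :=
  (X ^ (p * q) - 1) * (X ^ (q * r) - 1) * (X ^ (r * p) - 1) * (X - 1)

/-- Numerator `(X^{pqr}-1)(X^p-1)(X^q-1)(X^r-1)` of the ternary
inclusion-exclusion polynomial. -/
noncomputable def incexcN (p q r : ℕ) : Polynomial ℤ :=
  (X ^ (p * q * r) - 1) * (X ^ p - 1) * (X ^ q - 1) * (X ^ r - 1)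

/-- The coefficient of a polynomial at an integer index, interpreted as `0`
for negative indices (and automatically `0` beyond the degree). -/
noncomputable def coeffZ (Q : Polynomial ℤ) (m : ℤ) : ℤ :=
  if 0 ≤ m then Q.coeff m.toNat else 0

/-- `chi p q r n = 1` if `n` is `{p,q,r}`-representable, i.e. if in the unique
representation `n = x·qr + y·rp + z·pq + δ·pqr` with `0 ≤ x < p`, `0 ≤ y < q`,
`0 ≤ z < r`, the integer `δ` is nonnegative; `chi p q r n = 0` otherwise. -/
noncomputable def chi (p q r : ℕ) (n : ℤ) : ℤ :=
  if ∃ x y z δ : ℤ, 0 ≤ x ∧ x < p ∧ 0 ≤ y ∧ y < q ∧ 0 ≤ z ∧ z < r ∧ 0 ≤ δ ∧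
      n = x * q * r + y * r * p + z * p * q + δ * p * q * r
  then 1 else 0

/-- The summatory function `σ_k(m) = Σ_{m-k < n ≤ m} chi p q r n`. -/
noncomputable def sigmaSum (p q r k : ℕ) (m : ℤ) : ℤ :=
  ∑ i ∈ Finset.range k, chi p q r (m - i)

/-- The sum `Σ₁ = σ_s(m) − σ_s(m−p) − σ_s(m−q) + σ_s(m−q−p)`. -/
noncomputable def SigmaOne (p q r s : ℕ) (m : ℤ) : ℤ :=
  sigmaSum p q r s m - sigmaSum p q r s (m - p) - sigmaSum p q r s (m - q) +
    sigmaSum p q r s (m - q - p)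


/-!
Write `n = x·qr + y·rp + z·pq + δ·pqr` with digits `0 ≤ x < p`, `0 ≤ y < q`, `0 ≤ z < r`.
The series `∑ (δₙ + 1)⁺ Xⁿ` equals `(1 - X^{pqr}) / ((1 - X^{pq})(1 - X^{rp})(1 - X^{qr}))`:
multiplying by one factor at a time lowers a digit, borrowing from `δ` when the digit is `0`.
Hence `Q = ∑ (δₙ + 1)⁺ Xⁿ · (1 - X^p)(1 - X^q)(1 + X + ⋯ + X^{r-1})`, and since `(δₙ + 1)⁺ = χ(n)`
for `n < pqr`, `a_m` is the sum over `j < r` of the second difference of `χ` at `m - j`.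
The terms `j < s` give `Σ₁`. In the remaining `pq` terms the differences with steps `p` and `pq`
may be exchanged, and for `n < pqr` the difference `χ(n) - χ(n - pq)` is `χ(n)` if `r ∣ n` and
`0` otherwise; what survives are the multiples of `r` in `I'₂` with sign `+` and those in `I'₁`
with sign `-`. As `I'₁ ∪ I'₂` lies in an interval of length `p + q ≤ r`, there is at most one.
-/

def bwdDiff (t : ℕ) (u : ℤ → ℤ) (n : ℤ) : ℤ := u n - u (n - t)

theorem bwdDiff_comm (s t : ℕ) (u : ℤ → ℤ) :
    bwdDiff s (bwdDiff t u) = bwdDiff t (bwdDiff s u) := by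
  funext n
  simp only [bwdDiff, sub_right_comm n]
  ring

theorem sum_range_bwdDiff_comm (u : ℤ → ℤ) (A B : ℕ) (b : ℤ) :
    ∑ k ∈ Finset.range A, bwdDiff B u (b - k) = ∑ k ∈ Finset.range B, bwdDiff A u (b - k) := by
  have sum_split (C D : ℕ) : ∑ k ∈ Finset.range (C + D), u (b - k) =
      ∑ k ∈ Finset.range C, u (b - k) + ∑ k ∈ Finset.range D, u (b - k - C) := by
    rw [Finset.sum_range_add]
    congr 1
    refine Finset.sum_congr rfl fun k _ => ?_
    congr 1
    push_cast
    ring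
  have hAB := sum_split A B
  have hBA := sum_split B A
  rw [add_comm B A] at hBA
  simp only [bwdDiff, Finset.sum_sub_distrib]
  linarith

theorem sum_range_eq_sum_Ioc (u : ℤ → ℤ) (A : ℕ) (b : ℤ) :
    ∑ k ∈ Finset.range A, u (b - k) = ∑ n ∈ Finset.Ioc (b - A) b, u n := by
  refine Finset.sum_nbij' (fun k => b - k) (fun n => (b - n).toNat) ?_ ?_ ?_ ?_ ?_
  all_goals simp +contextual
  all_goals omega

def ofFun (u : ℤ → ℤ) : PowerSeries ℤ := PowerSeries.mk fun n => u n

theorem bwdDiff_congr {u v : ℤ → ℤ} {N : ℤ} (h : ∀ n < N, u n = v n) (t : ℕ) :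
    ∀ n < N, bwdDiff t u n = bwdDiff t v n := fun n hn => by
  simp only [bwdDiff, h n hn, h (n - t) (by omega)]

section Support

variable {u : ℤ → ℤ} (hu : ∀ n < 0, u n = 0)
include hu

theorem bwdDiff_of_neg (t : ℕ) : ∀ n < 0, bwdDiff t u n = 0 := fun n hn => by
  simp only [bwdDiff, hu n hn, hu (n - t) (by omega), sub_zero]

theorem ofFun_mul_one_sub_X_pow (t : ℕ) :
    ofFun u * (1 - PowerSeries.X ^ t) = ofFun (bwdDiff t u) := by
  ext n
  simp only [ofFun, bwdDiff, mul_sub, mul_one, map_sub, PowerSeries.coeff_mk,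
    PowerSeries.coeff_mul_X_pow']
  split_ifs with h
  · push_cast [h]
    rfl
  · rw [hu (n - t) (by omega)]

theorem coeff_ofFun_mul_geom_sum (r m : ℕ) :
    PowerSeries.coeff m (ofFun u * ∑ i ∈ Finset.range r, PowerSeries.X ^ i) =
      ∑ j ∈ Finset.range r, u (m - j) := by
  simp only [Finset.mul_sum, map_sum, PowerSeries.coeff_mul_X_pow', ofFun, PowerSeries.coeff_mk]
  refine Finset.sum_congr rfl fun j _ => ?_
  split_ifs with h
  · push_cast [h]
    rfl
  · rw [hu _ (by omega)]

end Support

theorem ofFun_indicator_zero : ofFun (fun n => if n = 0 then 1 else 0) = 1 := by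
  ext n
  simp [ofFun, PowerSeries.coeff_one]

def IsRep (p q r : ℕ) (n x y z δ : ℤ) : Prop :=
  0 ≤ x ∧ x < p ∧ 0 ≤ y ∧ y < q ∧ 0 ≤ z ∧ z < r ∧
    n = x * q * r + y * r * p + z * p * q + δ * p * q * r

namespace IsRep

variable {p q r : ℕ} {n x y z δ : ℤ}

theorem sub_pq (h : IsRep p q r n x y z δ) :
    IsRep p q r (n - p * q) x y (if z = 0 then r - 1 else z - 1) (if z = 0 then δ - 1 else δ) := by
  obtain ⟨hx, hxp, hy, hyq, hz, hzr, rfl⟩ := h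
  split_ifs with h0
  · exact ⟨hx, hxp, hy, hyq, by omega, by omega, by subst h0; ring⟩
  · exact ⟨hx, hxp, hy, hyq, by omega, by omega, by ring⟩

theorem sub_rp (h : IsRep p q r n x y z δ) :
    IsRep p q r (n - r * p) x (if y = 0 then q - 1 else y - 1) z (if y = 0 then δ - 1 else δ) := by
  obtain ⟨hx, hxp, hy, hyq, hz, hzr, rfl⟩ := h
  split_ifs with h0
  · exact ⟨hx, hxp, by omega, by omega, hz, hzr, by subst h0; ring⟩
  · exact ⟨hx, hxp, by omega, by omega, hz, hzr, by ring⟩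

theorem sub_qr (h : IsRep p q r n x y z δ) :
    IsRep p q r (n - q * r) (if x = 0 then p - 1 else x - 1) y z (if x = 0 then δ - 1 else δ) := by
  obtain ⟨hx, hxp, hy, hyq, hz, hzr, rfl⟩ := h
  split_ifs with h0
  · exact ⟨by omega, by omega, hy, hyq, hz, hzr, by subst h0; ring⟩
  · exact ⟨by omega, by omega, hy, hyq, hz, hzr, by ring⟩

theorem sub_pqr (h : IsRep p q r n x y z δ) : IsRep p q r (n - p * q * r) x y z (δ - 1) := by
  obtain ⟨hx, hxp, hy, hyq, hz, hzr, rfl⟩ := h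
  exact ⟨hx, hxp, hy, hyq, hz, hzr, by ring⟩

theorem nonneg_of_nonneg (h : IsRep p q r n x y z δ) (hδ : 0 ≤ δ) : 0 ≤ n := by
  obtain ⟨hx, -, hy, -, hz, -, rfl⟩ := h
  positivity

theorem nonpos_of_lt (h : IsRep p q r n x y z δ) (hn : n < p * q * r) : δ ≤ 0 := by
  obtain ⟨hx, -, hy, -, hz, -, rfl⟩ := h
  by_contra! hδ
  have : (0 : ℤ) ≤ x * q * r + y * r * p + z * p * q := by positivity
  nlinarith [mul_le_mul_of_nonneg_right hδ (by positivity : (0 : ℤ) ≤ p * q * r)]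

end IsRep

theorem eq_of_dvd_sub_mul {a b u v : ℤ} (hab : IsCoprime a b) (h : a ∣ (u - v) * b)
    (hu : 0 ≤ u) (hua : u < a) (hv : 0 ≤ v) (hva : v < a) : u = v := by
  have := Int.eq_zero_of_abs_lt_dvd (hab.dvd_of_dvd_mul_right h) (abs_lt.2 ⟨by linarith, by linarith⟩)
  linarith

theorem exists_dvd_sub_mul {a m : ℤ} (hm : 0 < m) (h : IsCoprime a m) (n : ℤ) :
    ∃ x, 0 ≤ x ∧ x < m ∧ m ∣ n - x * a := by
  obtain ⟨u, v, huv⟩ := h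
  refine ⟨n * u % m, Int.emod_nonneg _ hm.ne', Int.emod_lt_of_pos _ hm,
    n * v + n * u / m * a, ?_⟩
  rw [Int.emod_def]
  linear_combination (-n) * huv

section Coprime

variable {p q r : ℕ} (hpq : Nat.Coprime p q) (hpr : Nat.Coprime p r) (hqr : Nat.Coprime q r)
include hpq hpr hqr

theorem IsRep.unique {n x y z δ x' y' z' δ' : ℤ}
    (h : IsRep p q r n x y z δ) (h' : IsRep p q r n x' y' z' δ') :
    x' = x ∧ y' = y ∧ z' = z ∧ δ' = δ := by
  obtain ⟨hx, hxp, hy, hyq, hz, hzr, he⟩ := h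
  obtain ⟨hx', hxp', hy', hyq', hz', hzr', he'⟩ := h'
  have cpq := Nat.Coprime.isCoprime hpq
  have cpr := Nat.Coprime.isCoprime hpr
  have cqr := Nat.Coprime.isCoprime hqr
  have hxx : x' = x := eq_of_dvd_sub_mul (cpq.mul_right cpr)
    ⟨(y - y') * r + (z - z') * q + (δ - δ') * (q * r), by linear_combination he - he'⟩
    hx' hxp' hx hxp
  have hyy : y' = y := eq_of_dvd_sub_mul (cqr.mul_right cpq.symm)
    ⟨(x - x') * r + (z - z') * p + (δ - δ') * (p * r), by linear_combination he - he'⟩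
    hy' hyq' hy hyq
  have hzz : z' = z := eq_of_dvd_sub_mul (cpr.symm.mul_right cqr.symm)
    ⟨(x - x') * q + (y - y') * p + (δ - δ') * (p * q), by linear_combination he - he'⟩
    hz' hzr' hz hzr
  subst hxx hyy hzz
  refine ⟨rfl, rfl, rfl, ?_⟩
  have hpqr : (p * q * r : ℤ) ≠ 0 := by
    have : (0 : ℤ) < p := by omega
    have : (0 : ℤ) < q := by omega
    have : (0 : ℤ) < r := by omega
    positivity
  exact mul_right_cancel₀ hpqr (by linear_combination he - he')

theorem exists_isRep (hp : 0 < p) (hq : 0 < q) (hr : 0 < r) (n : ℤ) :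
    ∃ x y z δ, IsRep p q r n x y z δ := by
  have cpq := Nat.Coprime.isCoprime hpq
  have cpr := Nat.Coprime.isCoprime hpr
  have cqr := Nat.Coprime.isCoprime hqr
  obtain ⟨x, hx, hxp, n₁, hn₁⟩ := exists_dvd_sub_mul (by omega) (cpq.mul_right cpr).symm n
  obtain ⟨y, hy, hyq, n₂, hn₂⟩ := exists_dvd_sub_mul (by omega) cqr.symm n₁
  have hr' : (0 : ℤ) < r := by omega
  refine ⟨x, y, n₂ % r, n₂ / r, hx, hxp, hy, hyq, Int.emod_nonneg _ hr'.ne',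
    Int.emod_lt_of_pos _ hr', ?_⟩
  rw [Int.emod_def]
  linear_combination hn₁ + p * hn₂

end Coprime

theorem chi_of_neg {p q r : ℕ} {n : ℤ} (hn : n < 0) : chi p q r n = 0 := by
  rw [chi, if_neg]
  rintro ⟨x, y, z, δ, hx, -, hy, -, hz, -, hδ, rfl⟩
  exact hn.not_ge (by positivity)

structure Digits (p q r : ℕ) where
  x : ℤ → ℤ
  y : ℤ → ℤ
  z : ℤ → ℤ
  δ : ℤ → ℤ
  isRep : ∀ n, IsRep p q r n (x n) (y n) (z n) (δ n)
  eq_of_isRep : ∀ {n x' y' z' δ'}, IsRep p q r n x' y' z' δ' →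
    x' = x n ∧ y' = y n ∧ z' = z n ∧ δ' = δ n

theorem Digits.nonempty {p q r : ℕ} (hp : 0 < p) (hq : 0 < q) (hr : 0 < r)
    (hpq : Nat.Coprime p q) (hpr : Nat.Coprime p r) (hqr : Nat.Coprime q r) :
    Nonempty (Digits p q r) := by
  choose x y z δ h using exists_isRep hpq hpr hqr hp hq hr
  exact ⟨⟨x, y, z, δ, h, fun h' => (h _).unique hpq hpr hqr h'⟩⟩

theorem Digits.pos {p q r : ℕ} (D : Digits p q r) : 0 < p ∧ 0 < q ∧ 0 < r := by
  obtain ⟨hx, hxp, hy, hyq, hz, hzr, -⟩ := D.isRep 0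
  omega

namespace Digits

variable {p q r : ℕ} (D : Digits p q r)

theorem chi_eq (n : ℤ) : chi p q r n = if 0 ≤ D.δ n then 1 else 0 := by
  obtain ⟨hx, hxp, hy, hyq, hz, hzr, he⟩ := D.isRep n
  unfold chi
  by_cases hδ : 0 ≤ D.δ n
  · rw [if_pos hδ, if_pos ⟨_, _, _, _, hx, hxp, hy, hyq, hz, hzr, hδ, he⟩]
  · rw [if_neg hδ, if_neg]
    rintro ⟨x, y, z, δ, h1, h2, h3, h4, h5, h6, h7, h8⟩
    exact hδ ((D.eq_of_isRep ⟨h1, h2, h3, h4, h5, h6, h8⟩).2.2.2 ▸ h7)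

theorem eq_zero_iff (n : ℤ) : n = 0 ↔ D.x n = 0 ∧ D.y n = 0 ∧ D.z n = 0 ∧ D.δ n = 0 := by
  obtain ⟨hx, hxp, hy, hyq, hz, hzr, he⟩ := D.isRep n
  constructor
  · rintro rfl
    obtain ⟨h1, h2, h3, h4⟩ := D.eq_of_isRep (show IsRep p q r 0 0 0 0 0 from
      ⟨le_rfl, by omega, le_rfl, by omega, le_rfl, by omega, by ring⟩)
    exact ⟨h1.symm, h2.symm, h3.symm, h4.symm⟩
  · rintro ⟨h1, h2, h3, h4⟩
    rw [he, h1, h2, h3, h4]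
    ring

def chiHat (n : ℤ) : ℤ := if 0 ≤ D.δ n then D.δ n + 1 else 0

def psi₂ (n : ℤ) : ℤ := if D.z n = 0 ∧ 0 ≤ D.δ n then 1 else 0

def psi₁ (n : ℤ) : ℤ := if D.y n = 0 ∧ D.z n = 0 ∧ D.δ n = 0 then 1 else 0

theorem chiHat_of_neg {n : ℤ} (hn : n < 0) : D.chiHat n = 0 :=
  if_neg fun h => hn.not_ge ((D.isRep n).nonneg_of_nonneg h)

theorem chiHat_eq_chi {n : ℤ} (hn : n < p * q * r) : D.chiHat n = chi p q r n := by
  have := (D.isRep n).nonpos_of_lt hn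
  rw [D.chi_eq, chiHat]
  split_ifs <;> omega

theorem bwdDiff_chiHat : bwdDiff (p * q) D.chiHat = D.psi₂ := by
  funext n
  obtain ⟨-, -, -, hδ⟩ := D.eq_of_isRep (D.isRep n).sub_pq
  simp only [bwdDiff, chiHat, psi₂, Nat.cast_mul, ← hδ]
  split_ifs <;> omega

theorem bwdDiff_psi₂ : bwdDiff (r * p) D.psi₂ = D.psi₁ := by
  funext n
  obtain ⟨-, -, hz, hδ⟩ := D.eq_of_isRep (D.isRep n).sub_rp
  simp only [bwdDiff, psi₂, psi₁, Nat.cast_mul, ← hδ, ← hz]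
  split_ifs <;> omega

theorem bwdDiff_psi₁ :
    bwdDiff (q * r) D.psi₁ = bwdDiff (p * q * r) fun n => if n = 0 then 1 else 0 := by
  funext n
  obtain ⟨-, hy, hz, hδ⟩ := D.eq_of_isRep (D.isRep n).sub_qr
  obtain ⟨hx', hy', hz', hδ'⟩ := D.eq_of_isRep (D.isRep n).sub_pqr
  have h0 := D.eq_zero_iff n
  have h1 := D.eq_zero_iff (n - p * q * r)
  simp only [bwdDiff, psi₁, Nat.cast_mul, ← hy, ← hz, ← hδ, h0, h1, ← hx', ← hy', ← hz', ← hδ']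
  have := (D.isRep n).1
  split_ifs <;> omega

theorem ofFun_chiHat_mul :
    ofFun D.chiHat * (1 - PowerSeries.X ^ (p * q)) * (1 - PowerSeries.X ^ (r * p)) *
      (1 - PowerSeries.X ^ (q * r)) = 1 - PowerSeries.X ^ (p * q * r) := by
  have hχ : ∀ n < 0, D.chiHat n = 0 := fun _ => D.chiHat_of_neg
  have hψ₂ : ∀ n < 0, D.psi₂ n = 0 := D.bwdDiff_chiHat ▸ bwdDiff_of_neg hχ _
  have hψ₁ : ∀ n < 0, D.psi₁ n = 0 := D.bwdDiff_psi₂ ▸ bwdDiff_of_neg hψ₂ _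
  rw [ofFun_mul_one_sub_X_pow hχ, bwdDiff_chiHat, ofFun_mul_one_sub_X_pow hψ₂, bwdDiff_psi₂,
    ofFun_mul_one_sub_X_pow hψ₁, bwdDiff_psi₁, ← ofFun_mul_one_sub_X_pow (by intros; omega),
    ofFun_indicator_zero, one_mul]

theorem coe_eq_of_mul_eq {Q : Polynomial ℤ} (hQ : Q * incexcD p q r = incexcN p q r) :
    (Q : PowerSeries ℤ) = ofFun D.chiHat * (1 - PowerSeries.X ^ p) * (1 - PowerSeries.X ^ q) *
      ∑ i ∈ Finset.range r, PowerSeries.X ^ i := by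
  obtain ⟨hp, hq, hr⟩ := D.pos
  have hD : ((incexcD p q r : Polynomial ℤ) : PowerSeries ℤ) ≠ 0 := by
    intro h
    have := congrArg PowerSeries.constantCoeff h
    simp [incexcD, hp.ne', hq.ne', hr.ne'] at this
  refine mul_right_cancel₀ hD ?_
  rw [← Polynomial.coe_mul, hQ]
  simp only [incexcD, incexcN]
  push_cast
  linear_combination -(1 - PowerSeries.X ^ p) * (1 - PowerSeries.X ^ q) *
      (∑ i ∈ Finset.range r, PowerSeries.X ^ i) * (1 - PowerSeries.X) * D.ofFun_chiHat_mul +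
    -(1 - PowerSeries.X ^ (p * q * r)) * (1 - PowerSeries.X ^ p) * (1 - PowerSeries.X ^ q) *
      geom_sum_mul_neg (PowerSeries.X : PowerSeries ℤ) r

end Digits

section Coprime

variable {p q r : ℕ} (hp : 0 < p) (hq : 0 < q) (hr : 0 < r)
  (hpq : Nat.Coprime p q) (hpr : Nat.Coprime p r) (hqr : Nat.Coprime q r)
include hp hq hr hpq hpr hqr

theorem coeffZ_eq_sum {Q : Polynomial ℤ} (hQ : Q * incexcD p q r = incexcN p q r) {m : ℤ}
    (hm : m < p * q * r) :
    coeffZ Q m = ∑ j ∈ Finset.range r, bwdDiff q (bwdDiff p (chi p q r)) (m - j) := by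
  rcases lt_or_ge m 0 with hm0 | hm0
  · rw [coeffZ, if_neg hm0.not_ge]
    exact (Finset.sum_eq_zero fun j _ =>
      bwdDiff_of_neg (bwdDiff_of_neg (fun _ => chi_of_neg) p) q _ (by omega)).symm
  lift m to ℕ using hm0
  obtain ⟨D⟩ := Digits.nonempty hp hq hr hpq hpr hqr
  have hχ : ∀ n < 0, D.chiHat n = 0 := fun _ => D.chiHat_of_neg
  rw [coeffZ, if_pos (by positivity), Int.toNat_natCast, ← Polynomial.coeff_coe,
    D.coe_eq_of_mul_eq hQ, ofFun_mul_one_sub_X_pow hχ,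
    ofFun_mul_one_sub_X_pow (bwdDiff_of_neg hχ p),
    coeff_ofFun_mul_geom_sum (bwdDiff_of_neg (bwdDiff_of_neg hχ p) q)]
  exact Finset.sum_congr rfl fun j _ => bwdDiff_congr (bwdDiff_congr
    (fun _ => D.chiHat_eq_chi) p) q _ (by omega)

theorem bwdDiff_chi_pq {n : ℤ} (hn : n < p * q * r) :
    bwdDiff (p * q) (chi p q r) n = if (r : ℤ) ∣ n then chi p q r n else 0 := by
  obtain ⟨D⟩ := Digits.nonempty hp hq hr hpq hpr hqr
  obtain ⟨hx, hxp, hy, hyq, hz, hzr, he⟩ := D.isRep n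
  have hdvd : (r : ℤ) ∣ n ↔ D.z n = 0 := by
    refine ⟨fun ⟨c, hc⟩ => eq_of_dvd_sub_mul (Nat.Coprime.isCoprime (hpr.symm.mul_right hqr.symm))
      ⟨c - D.x n * q - D.y n * p - D.δ n * (p * q), ?_⟩ hz hzr le_rfl (by omega), fun h0 => ?_⟩
    · push_cast
      linear_combination hc - he
    · exact ⟨D.x n * q + D.y n * p + D.δ n * (p * q), by linear_combination he + (p * q : ℤ) * h0⟩
  obtain ⟨-, -, -, hδ⟩ := D.eq_of_isRep (D.isRep n).sub_pq
  have := (D.isRep n).nonpos_of_lt hn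
  simp only [bwdDiff, D.chi_eq, Nat.cast_mul, ← hδ, hdvd]
  split_ifs <;> omega

end Coprime

theorem SigmaOne_eq_sum (p q r s : ℕ) (m : ℤ) :
    SigmaOne p q r s m = ∑ j ∈ Finset.range s, bwdDiff q (bwdDiff p (chi p q r)) (m - j) := by
  simp only [SigmaOne, sigmaSum, bwdDiff, Finset.sum_sub_distrib]
  ring_nf

theorem coeffZ_eq_SigmaOne_add_sub {p q r s : ℕ} (hp : 0 < p) (hq : 0 < q)
    (hpq : Nat.Coprime p q) (hpr : Nat.Coprime p r) (hqr : Nat.Coprime q r) (hrs : r = p * q + s)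
    {Q : Polynomial ℤ} (hQ : Q * incexcD p q r = incexcN p q r) {m : ℤ} (hm : m < p * q * r) :
    coeffZ Q m = SigmaOne p q r s m +
      ∑ n ∈ Finset.Ioc (m - s - p) (m - s), (if (r : ℤ) ∣ n then chi p q r n else 0) -
      ∑ n ∈ Finset.Ioc (m - s - q - p) (m - s - q), (if (r : ℤ) ∣ n then chi p q r n else 0) := by
  have hr : 0 < r := hrs ▸ Nat.add_pos_left (Nat.mul_pos hp hq) s
  have htail : ∑ k ∈ Finset.range (p * q), bwdDiff q (bwdDiff p (chi p q r)) (m - ↑(s + k)) =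
      ∑ k ∈ Finset.range p, ((if (r : ℤ) ∣ m - s - k then chi p q r (m - s - k) else 0) -
        (if (r : ℤ) ∣ m - s - q - k then chi p q r (m - s - q - k) else 0)) := calc
    _ = ∑ k ∈ Finset.range (p * q), bwdDiff p (bwdDiff q (chi p q r)) (m - s - k) := by
      push_cast
      simp only [bwdDiff_comm q p, sub_add_eq_sub_sub]
    _ = ∑ k ∈ Finset.range p, bwdDiff q (bwdDiff (p * q) (chi p q r)) (m - s - k) := by
      rw [sum_range_bwdDiff_comm, bwdDiff_comm]
    _ = _ := Finset.sum_congr rfl fun k _ => by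
      rw [bwdDiff, bwdDiff_chi_pq hp hq hr hpq hpr hqr (n := m - s - k) (by omega),
        bwdDiff_chi_pq hp hq hr hpq hpr hqr (n := m - s - k - q) (by omega),
        sub_right_comm _ (k : ℤ)]
  rw [coeffZ_eq_sum hp hq hr hpq hpr hqr hQ hm,
    show Finset.range r = Finset.range (s + p * q) by rw [hrs, add_comm], Finset.sum_range_add,
    ← SigmaOne_eq_sum, htail, Finset.sum_sub_distrib,
    sum_range_eq_sum_Ioc (fun n => if (r : ℤ) ∣ n then chi p q r n else 0),
    sum_range_eq_sum_Ioc (fun n => if (r : ℤ) ∣ n then chi p q r n else 0), add_sub_assoc]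

theorem eq_of_dvd_of_mem_Ioc {a b r n₁ n₂ : ℤ} (hab : b - a ≤ r) (h₁ : a < n₁ ∧ n₁ ≤ b)
    (h₂ : a < n₂ ∧ n₂ ≤ b) (d₁ : r ∣ n₁) (d₂ : r ∣ n₂) : n₁ = n₂ := by
  have := Int.eq_zero_of_abs_lt_dvd (dvd_sub d₁ d₂) (abs_lt.2 ⟨by omega, by omega⟩)
  omega

theorem sum_ite_dvd_eq_zero {s : Finset ℤ} {r : ℤ} {f : ℤ → ℤ} (h : ∀ n ∈ s, ¬ r ∣ n) :
    ∑ n ∈ s, (if r ∣ n then f n else 0) = 0 :=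
  Finset.sum_eq_zero fun n hn => if_neg (h n hn)

theorem sum_ite_dvd_eq_of_forall_dvd {s : Finset ℤ} {r a : ℤ} {f : ℤ → ℤ} (ha : a ∈ s)
    (hra : r ∣ a) (h : ∀ n ∈ s, r ∣ n → n = a) :
    ∑ n ∈ s, (if r ∣ n then f n else 0) = f a := by
  rw [Finset.sum_eq_single_of_mem a ha fun n hn hne => if_neg fun hd => hne (h n hn hd), if_pos hra]

theorem stmt_16_general (p q s : ℕ) (hp : 3 ≤ p) (hpq' : p < q)
    (hpq : Nat.Coprime p q) (hspq : Nat.Coprime s (p * q))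
    (Q : Polynomial ℤ)
    (hQ : Q * incexcD p q (p * q + s) = incexcN p q (p * q + s))
    (m : ℤ) (hm : m < (p : ℤ) * q * (p * q + s)) :
    (∀ n₁ n₂ : ℤ,
      ((m - s - q - p < n₁ ∧ n₁ ≤ m - s - q) ∨ (m - s - p < n₁ ∧ n₁ ≤ m - s)) →
      ((m - s - q - p < n₂ ∧ n₂ ≤ m - s - q) ∨ (m - s - p < n₂ ∧ n₂ ≤ m - s)) →
      ((p : ℤ) * q + s) ∣ n₁ → ((p : ℤ) * q + s) ∣ n₂ → n₁ = n₂) ∧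
    ((¬ ∃ n : ℤ,
        ((m - s - q - p < n ∧ n ≤ m - s - q) ∨ (m - s - p < n ∧ n ≤ m - s)) ∧
        ((p : ℤ) * q + s) ∣ n) →
      coeffZ Q m = SigmaOne p q (p * q + s) s m) ∧
    (∀ α : ℤ,
      (m - s - q - p < α * ((p : ℤ) * q + s) ∧ α * ((p : ℤ) * q + s) ≤ m - s - q) →
      coeffZ Q m = SigmaOne p q (p * q + s) s m -
        chi p q (p * q + s) (α * ((p : ℤ) * q + s))) ∧
    (∀ α : ℤ,
      (m - s - p < α * ((p : ℤ) * q + s) ∧ α * ((p : ℤ) * q + s) ≤ m - s) →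
      coeffZ Q m = SigmaOne p q (p * q + s) s m +
        chi p q (p * q + s) (α * ((p : ℤ) * q + s))) := by
  have hpr : Nat.Coprime p (p * q + s) :=
    (Nat.coprime_mul_left_add_right p s q).2 (hspq.coprime_dvd_right (dvd_mul_right p q)).symm
  have hqr : Nat.Coprime q (p * q + s) :=
    (Nat.coprime_mul_right_add_right q s p).2 (hspq.coprime_dvd_right (dvd_mul_left q p)).symm
  have hformula := coeffZ_eq_SigmaOne_add_sub (by omega) (by omega) hpq hpr hqr rfl hQ
    (m := m) (by push_cast; exact hm)
  push_cast at hformula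
  have hlen : (p : ℤ) + q ≤ p * q + s := by nlinarith
  have huniq : ∀ n₁ n₂ : ℤ,
      ((m - s - q - p < n₁ ∧ n₁ ≤ m - s - q) ∨ (m - s - p < n₁ ∧ n₁ ≤ m - s)) →
      ((m - s - q - p < n₂ ∧ n₂ ≤ m - s - q) ∨ (m - s - p < n₂ ∧ n₂ ≤ m - s)) →
      ((p : ℤ) * q + s) ∣ n₁ → ((p : ℤ) * q + s) ∣ n₂ → n₁ = n₂ := fun n₁ n₂ h₁ h₂ =>
    eq_of_dvd_of_mem_Ioc (a := m - s - q - p) (b := m - s) (by omega) (by omega) (by omega)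
  refine ⟨huniq, fun hnone => ?_, fun α hα => ?_, fun α hα => ?_⟩
  · rw [hformula, sum_ite_dvd_eq_zero fun n hn hd => hnone ⟨n, .inr (Finset.mem_Ioc.1 hn), hd⟩,
      sum_ite_dvd_eq_zero fun n hn hd => hnone ⟨n, .inl (Finset.mem_Ioc.1 hn), hd⟩]
    ring
  · rw [hformula, sum_ite_dvd_eq_of_forall_dvd (Finset.mem_Ioc.2 hα) (dvd_mul_left _ _)
      fun n hn hd => huniq _ _ (.inl (Finset.mem_Ioc.1 hn)) (.inl hα) hd (dvd_mul_left _ _),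
      sum_ite_dvd_eq_zero fun n hn hd => ?_]
    · ring
    -- a multiple of `r` in `I'₂` would be `αr ∈ I'₁`, but `I'₁` lies below `I'₂` as `p < q`
    · have := huniq _ _ (.inr (Finset.mem_Ioc.1 hn)) (.inl hα) hd (dvd_mul_left _ _)
      have := Finset.mem_Ioc.1 hn
      omega
  · rw [hformula, sum_ite_dvd_eq_of_forall_dvd (Finset.mem_Ioc.2 hα) (dvd_mul_left _ _)
      fun n hn hd => huniq _ _ (.inr (Finset.mem_Ioc.1 hn)) (.inr hα) hd (dvd_mul_left _ _),
      sum_ite_dvd_eq_zero fun n hn hd => ?_]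
    · ring
    · have := huniq _ _ (.inl (Finset.mem_Ioc.1 hn)) (.inr hα) hd (dvd_mul_left _ _)
      have := Finset.mem_Ioc.1 hn
      omega

theorem stmt_16 (p q s : ℕ) (hp : 3 ≤ p) (hpq' : p < q) (hs : 1 ≤ s)
    (hpq : Nat.Coprime p q) (hspq : Nat.Coprime s (p * q))
    (Q : Polynomial ℤ)
    (hQ : Q * incexcD p q (p * q + s) = incexcN p q (p * q + s))
    (m : ℤ) (hm : m < (p : ℤ) * q * (p * q + s)) :
    (∀ n₁ n₂ : ℤ,
      ((m - s - q - p < n₁ ∧ n₁ ≤ m - s - q) ∨ (m - s - p < n₁ ∧ n₁ ≤ m - s)) →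
      ((m - s - q - p < n₂ ∧ n₂ ≤ m - s - q) ∨ (m - s - p < n₂ ∧ n₂ ≤ m - s)) →
      ((p : ℤ) * q + s) ∣ n₁ → ((p : ℤ) * q + s) ∣ n₂ → n₁ = n₂) ∧
    ((¬ ∃ n : ℤ,
        ((m - s - q - p < n ∧ n ≤ m - s - q) ∨ (m - s - p < n ∧ n ≤ m - s)) ∧
        ((p : ℤ) * q + s) ∣ n) →
      coeffZ Q m = SigmaOne p q (p * q + s) s m) ∧
    (∀ α : ℤ,
      (m - s - q - p < α * ((p : ℤ) * q + s) ∧ α * ((p : ℤ) * q + s) ≤ m - s - q) →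
      coeffZ Q m = SigmaOne p q (p * q + s) s m -
        chi p q (p * q + s) (α * ((p : ℤ) * q + s))) ∧
    (∀ α : ℤ,
      (m - s - p < α * ((p : ℤ) * q + s) ∧ α * ((p : ℤ) * q + s) ≤ m - s) →
      coeffZ Q m = SigmaOne p q (p * q + s) s m +
        chi p q (p * q + s) (α * ((p : ℤ) * q + s))) :=
  stmt_16_general p q s hp hpq' hpq hspq Q hQ m hm
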